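/- Let θ > 0, D = 2 and Θ = [[0, θ], [−θ, 0]]. The Gaussian f₀(x) = 2 e^{−(x₁² + x₂²)/θ} is idempotent for the Moyal product: (f₀ ⋆ f₀)(x) = f₀(x) for every x ∈ ℝ². -/

import Mathlib

/-!
Both integrals are Gaussian. The inner integral over `y` is the Fourier transform of a translate of
`f₀`, namely `2πθ e^{-θ|k|²/4 - i⟨k, x⟩}`. Multiplying by `f₀(x + ½Θk)` leaves a Gaussian in `k`
whose linear coefficient `c = (x₂ - i x₁, -x₁ - i x₂)` is isotropic, `c₁² + c₂² = 0`, so the outer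
integral produces no exponential factor and only the constants `2πθ · 2 · 2π/θ` remain.
-/

open MeasureTheory Matrix

/-- The Gaussian `f₀(x) = 2 e^{−(x₁² + x₂²)/θ}` on the Moyal plane. -/
noncomputable def f0 (θ : ℝ) (x : Fin 2 → ℝ) : ℂ :=
  ((2 * Real.exp (-(x 0 ^ 2 + x 1 ^ 2) / θ) : ℝ) : ℂ)

open Complex

theorem integral_cexp_quadratic_fin_two {b : ℂ} (hb : 0 < b.re) (c : Fin 2 → ℂ) (d : ℂ) :
    ∫ v : Fin 2 → ℝ, cexp (-b * ∑ i, (v i : ℂ) ^ 2 + ∑ i, c i * v i + d)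
      = Real.pi / b * cexp ((∑ i, c i ^ 2) / (4 * b) + d) := by
  simp_rw [Complex.exp_add _ d, integral_mul_const,
    GaussianFourier.integral_cexp_neg_mul_sum_add hb c, Fintype.card_fin]
  norm_num [mul_assoc]

theorem f0_eq_cexp (θ : ℝ) (v : Fin 2 → ℝ) :
    f0 θ v = 2 * cexp (-(θ : ℂ)⁻¹ * ∑ i, (v i : ℂ) ^ 2) := by
  simp only [f0, Fin.sum_univ_two]
  push_cast
  ring_nf

theorem integral_f0_add_mul_cexp {θ : ℝ} (hθ : 0 < θ) (x k : Fin 2 → ℝ) :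
    ∫ y : Fin 2 → ℝ, f0 θ (x + y) * cexp (I * ((∑ i, k i * y i : ℝ) : ℂ))
      = 2 * Real.pi * θ * cexp (-(θ / 4) * ∑ i, (k i : ℂ) ^ 2 - I * ((∑ i, k i * x i : ℝ) : ℂ)) := by
  have hθ' : (θ : ℂ) ≠ 0 := ofReal_ne_zero.2 hθ.ne'
  have hb : 0 < ((θ : ℂ)⁻¹).re := by simpa using hθ
  have hintegrand : ∀ y : Fin 2 → ℝ, f0 θ (x + y) * cexp (I * ((∑ i, k i * y i : ℝ) : ℂ))
      = 2 * cexp (-(θ : ℂ)⁻¹ * ∑ i, (y i : ℂ) ^ 2 + ∑ i, (I * k i - 2 * x i / θ) * y i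
        + -(θ : ℂ)⁻¹ * ∑ i, (x i : ℂ) ^ 2) := by
    intro y
    rw [f0_eq_cexp, mul_assoc, ← Complex.exp_add]
    congr 2
    simp only [Fin.sum_univ_two, Pi.add_apply]
    push_cast
    field_simp
    ring
  simp_rw [hintegrand]
  rw [integral_const_mul, integral_cexp_quadratic_fin_two hb, div_inv_eq_mul, ← mul_assoc, ← mul_assoc]
  congr 2
  simp only [Fin.sum_univ_two]
  push_cast
  field_simp
  linear_combination (θ ^ 2 * ((k 0 : ℂ) ^ 2 + (k 1 : ℂ) ^ 2)) * I_sq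

theorem f0_add_half_symplectic_mul_cexp {θ : ℝ} (hθ : θ ≠ 0) (x k : Fin 2 → ℝ) :
    f0 θ (x + (2⁻¹ : ℝ) • (!![0, θ; -θ, 0] : Matrix (Fin 2) (Fin 2) ℝ) *ᵥ k)
        * cexp (-(θ / 4) * ∑ i, (k i : ℂ) ^ 2 - I * ((∑ i, k i * x i : ℝ) : ℂ))
      = 2 * cexp (-(θ / 2) * ∑ i, (k i : ℂ) ^ 2 + ∑ i, ![x 1 - I * x 0, -x 0 - I * x 1] i * k i
        + -(θ : ℂ)⁻¹ * ∑ i, (x i : ℂ) ^ 2) := by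
  have hθ' : (θ : ℂ) ≠ 0 := ofReal_ne_zero.2 hθ
  rw [f0_eq_cexp, mul_assoc, ← Complex.exp_add]
  congr 2
  simp only [Fin.sum_univ_two, Pi.add_apply, Pi.smul_apply, smul_eq_mul, mulVec, dotProduct,
    cons_val_zero, cons_val_one, of_apply, cons_val', empty_val', cons_val_fin_one]
  push_cast
  field_simp
  ring

/-- `f₀` is idempotent for the Moyal product with `Θ = [[0, θ], [−θ, 0]]`:
`(f₀ ⋆ f₀)(x) = f₀(x)` for every `x ∈ ℝ²`. -/
theorem stmt7 (θ : ℝ) (hθ : 0 < θ) (x : Fin 2 → ℝ) :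
    (((2 * Real.pi) ^ 2)⁻¹ : ℝ) •
      (∫ k : Fin 2 → ℝ, ∫ y : Fin 2 → ℝ,
        f0 θ (x + (2⁻¹ : ℝ) •
            Matrix.mulVec (!![0, θ; -θ, 0] : Matrix (Fin 2) (Fin 2) ℝ) k) *
          f0 θ (x + y) *
          Complex.exp (Complex.I * ((∑ i, k i * y i : ℝ) : ℂ)))
      = f0 θ x := by
  have hθ' : (θ : ℂ) ≠ 0 := ofReal_ne_zero.2 hθ.ne'
  have hb : 0 < ((θ : ℂ) / 2).re := by simpa using hθ
  simp_rw [mul_assoc, integral_const_mul, integral_f0_add_mul_cexp hθ, mul_left_comm (f0 θ _),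
    f0_add_half_symplectic_mul_cexp hθ.ne', integral_const_mul, integral_cexp_quadratic_fin_two hb]
  have hc : ∑ i, ![(x 1 : ℂ) - I * x 0, -x 0 - I * x 1] i ^ 2 = 0 := by
    simp only [Fin.sum_univ_two, cons_val_zero, cons_val_one]
    linear_combination ((x 0 : ℂ) ^ 2 + (x 1 : ℂ) ^ 2) * I_sq
  rw [hc, zero_div, zero_add, f0_eq_cexp, Complex.real_smul]
  push_cast
  field_simp
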